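/- (Shampoo equivariance.) Let f be a feed-forward network as in Definition 4.1 with layer widths m₀ = d, m₁,…,m_{L+1}, D a feature-label distribution, and ℓ a loss with finite differentiable population loss. Fix U ∈ O(d) with induced parameter rotation Q^(U), stepsize η > 0, and ε > 0. Run the Shampoo algorithm (initialized preconditioners L₀^(j) = εI_{m_j}, R₀^(j) = εI_{m_{j−1}}; at each step, with G_t^(j) the layer-j block of ∇_θL̃(θ_t) reshaped into an m_j×m_{j−1} matrix, update L_{t+1}^(j) = L_t^(j) + G_t^(j)(G_t^(j))ᵀ, R_{t+1}^(j) = R_t^(j) + (G_t^(j))ᵀG_t^(j), and update the layer-j parameters by subtracting η·vec((L_{t+1}^(j))^{−1/4} G_t^(j) (R_{t+1}^(j))^{−1/4})). Let θ_t^(I) be the Shampoo iterates on L(·;f) initialized at θ₀, and θ_t^(U) the Shampoo iterates on L^(U)(·;f) initialized at (Q^(U))ᵀθ₀. Then for every t ≥ 0: θ_t^(U) = (Q^(U))ᵀθ_t^(I), and f(θ_t^(U); x) = f(θ_t^(I); Uᵀx) for all x ∈ ℝᵈ; hence the decision boundaries produced by Shampoo are equivariant to data rotations. -/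

import Mathlib

open MeasureTheory Matrix

/-- Index set for the parameter vector `θ ∈ ℝᵖ` of a feed-forward network (Definition 4.1)
with input dimension `d` and `L+1` hidden layers of widths `m 1, …, m (L+1)` (scalar output).
The five summands index, respectively: the entries of the first-layer weight matrix
`W₁ ∈ ℝ^{m₁×d}`; the entries of the deeper hidden-layer weight matrices
`W_{j+2} ∈ ℝ^{m_{j+2}×m_{j+1}}` for `j < L`; the entries of the hidden-layer bias vectors;
the entries of the output-layer weight (row) vector; and the output bias. -/
abbrev PIdx (d L : ℕ) (m : ℕ → ℕ) : Type :=
  (Fin (m 1) × Fin d) ⊕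
  ((j : Fin L) × (Fin (m (j.1 + 2)) × Fin (m (j.1 + 1)))) ⊕
  ((j : Fin (L + 1)) × Fin (m (j.1 + 1))) ⊕
  Fin (m (L + 1)) ⊕ Unit

/-- The parameter space `ℝᵖ` of the network, presented with coordinates `PIdx d L m`. -/
abbrev PSpace (d L : ℕ) (m : ℕ → ℕ) : Type := PIdx d L m → ℝ

/-- Hidden-layer outputs of the network (Definition 4.1): `hLayer … j` is the output of
hidden layer `j+1`, i.e. `h₁ = x` and `h_{j+1} = σ_{j+1}(W_j h_j + b_j)` entrywise. -/
noncomputable def hLayer (d L : ℕ) (m : ℕ → ℕ) (act : ℕ → ℝ → ℝ) (θ : PSpace d L m)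
    (x : Fin d → ℝ) : (j : ℕ) → Fin (m (j + 1)) → ℝ
  | 0 => fun i =>
      act 1 ((∑ c, θ (Sum.inl (i, c)) * x c)
        + θ (Sum.inr (Sum.inr (Sum.inl ⟨⟨0, Nat.succ_pos L⟩, i⟩))))
  | j + 1 => fun i =>
      if hj : j < L then
        act (j + 2)
          ((∑ c, θ (Sum.inr (Sum.inl ⟨⟨j, hj⟩, (i, c)⟩)) * hLayer d L m act θ x j c)
            + θ (Sum.inr (Sum.inr (Sum.inl ⟨⟨j + 1, by omega⟩, i⟩))))
      else 0

/-- The (scalar-valued) feed-forward network of Definition 4.1: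
`f(θ; x) = W_{L+1} h_L(θ;x) + b_{L+1}`. -/
noncomputable def ffnet (d L : ℕ) (m : ℕ → ℕ) (act : ℕ → ℝ → ℝ) (θ : PSpace d L m)
    (x : Fin d → ℝ) : ℝ :=
  (∑ i, θ (Sum.inr (Sum.inr (Sum.inr (Sum.inl i)))) * hLayer d L m act θ x L i)
    + θ (Sum.inr (Sum.inr (Sum.inr (Sum.inr ()))))

/-- The parameter rotation `Q^(U)` induced by a data-space matrix `U`: it acts on the
`vec(W₁)` coordinates by the block `Uᵀ ⊗ I_{m₁}` (i.e. `W₁ ↦ W₁U`) and is the identity on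
all remaining coordinates. -/
noncomputable def rotQ (d L : ℕ) (m : ℕ → ℕ) (U : Matrix (Fin d) (Fin d) ℝ)
    (θ : PSpace d L m) : PSpace d L m :=
  fun idx =>
    match idx with
    | Sum.inl (i, c) => ∑ c', θ (Sum.inl (i, c')) * U c' c
    | idx => θ idx

/-- The gradient `∇g(θ)` of a function on parameter space, as a vector of partial
derivatives. -/
noncomputable def gradVec (d L : ℕ) (m : ℕ → ℕ) (g : PSpace d L m → ℝ)
    (θ : PSpace d L m) : PSpace d L m :=
  fun i => fderiv ℝ g θ (Pi.single i 1)

/-- The rotated feature-label distribution `D^(U)`: the law of `(Ux, y)` for `(x,y) ~ D`. -/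
noncomputable def rotMeas (d : ℕ) (U : Matrix (Fin d) (Fin d) ℝ)
    (D : Measure ((Fin d → ℝ) × ℝ)) : Measure ((Fin d → ℝ) × ℝ) :=
  D.map (fun q => (U.mulVec q.1, q.2))

/-- The population loss `L(θ; g) = E_{(x,y)~D}[ℓ(y, g(θ;x))]`. -/
noncomputable def popLoss {d : ℕ} {P : Type*} (D : Measure ((Fin d → ℝ) × ℝ))
    (ℓ : ℝ → ℝ → ℝ) (g : P → (Fin d → ℝ) → ℝ) (θ : P) : ℝ :=
  ∫ q, ℓ q.2 (g θ q.1) ∂D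

/-- The inverse fourth root `A^{−1/4}` of a positive-(semi)definite matrix, via the unique
positive semidefinite square root (junk value `0` off the positive semidefinite cone). -/
noncomputable def psdSqrtOld {n : Type*} [Fintype n] [DecidableEq n]
    (A : Matrix n n ℝ) (hA : A.IsHermitian) : Matrix n n ℝ :=
  hA.eigenvectorUnitary.1 * diagonal ((↑) ∘ (√·) ∘ hA.eigenvalues) *
    (star hA.eigenvectorUnitary : Matrix n n ℝ)

theorem psdSqrtOld_isHermitian {n : Type*} [Fintype n] [DecidableEq n]
    (A : Matrix n n ℝ) (hA : A.IsHermitian) : (psdSqrtOld A hA).IsHermitian := by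
  unfold psdSqrtOld
  rw [Matrix.star_eq_conjTranspose]
  exact Matrix.isHermitian_mul_mul_conjTranspose _ (Matrix.isHermitian_diagonal _)

noncomputable def invFourthRoot {n : Type*} [Fintype n] [DecidableEq n]
    (A : Matrix n n ℝ) : Matrix n n ℝ :=
  open scoped Classical in
  if hA : A.PosSemidef then
    (psdSqrtOld (psdSqrtOld A hA.1) (psdSqrtOld_isHermitian A hA.1))⁻¹ else 0

/-- The state of the Shampoo optimizer: current parameters together with the left- and
right-preconditioners of every layer (first layer, deeper hidden layers, output layer). -/
structure SState (d L : ℕ) (m : ℕ → ℕ) where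
  θ : PSpace d L m
  L1 : Matrix (Fin (m 1)) (Fin (m 1)) ℝ
  R1 : Matrix (Fin d) (Fin d) ℝ
  Lmid : (j : Fin L) → Matrix (Fin (m (j.1 + 2))) (Fin (m (j.1 + 2))) ℝ
  Rmid : (j : Fin L) → Matrix (Fin (m (j.1 + 1))) (Fin (m (j.1 + 1))) ℝ
  Lout : Matrix (Fin 1) (Fin 1) ℝ
  Rout : Matrix (Fin (m (L + 1))) (Fin (m (L + 1))) ℝ

/-- The first-layer block of a gradient vector, reshaped as an `m₁ × d` matrix. -/
noncomputable def G1 (d L : ℕ) (m : ℕ → ℕ) (g : PSpace d L m) :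
    Matrix (Fin (m 1)) (Fin d) ℝ :=
  Matrix.of fun i c => g (Sum.inl (i, c))

/-- The layer-`(j+2)` block of a gradient vector, reshaped as a matrix. -/
noncomputable def Gmid (d L : ℕ) (m : ℕ → ℕ) (g : PSpace d L m) (j : Fin L) :
    Matrix (Fin (m (j.1 + 2))) (Fin (m (j.1 + 1))) ℝ :=
  Matrix.of fun i c => g (Sum.inr (Sum.inl ⟨j, (i, c)⟩))

/-- The output-layer block of a gradient vector, reshaped as a `1 × m_{L+1}` matrix. -/
noncomputable def Gout (d L : ℕ) (m : ℕ → ℕ) (g : PSpace d L m) :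
    Matrix (Fin 1) (Fin (m (L + 1))) ℝ :=
  Matrix.of fun _ c => g (Sum.inr (Sum.inr (Sum.inr (Sum.inl c))))

/-- One step of Shampoo (Algorithm 5) with stepsize `η`, driven by the gradient oracle
`gr`: each layer's preconditioners are updated by the Gram matrices of the layer's
gradient block, and the layer's weights are updated by the `(−1/4)`-th powers of the
preconditioners; bias coordinates are unchanged. -/
noncomputable def shampooStep (d L : ℕ) (m : ℕ → ℕ) (η : ℝ)
    (gr : PSpace d L m → PSpace d L m) (s : SState d L m) : SState d L m :=
  let G := gr s.θ
  let L1' := s.L1 + G1 d L m G * (G1 d L m G)ᵀ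
  let R1' := s.R1 + (G1 d L m G)ᵀ * G1 d L m G
  let Lmid' := fun j : Fin L => s.Lmid j + Gmid d L m G j * (Gmid d L m G j)ᵀ
  let Rmid' := fun j : Fin L => s.Rmid j + (Gmid d L m G j)ᵀ * Gmid d L m G j
  let Lout' := s.Lout + Gout d L m G * (Gout d L m G)ᵀ
  let Rout' := s.Rout + (Gout d L m G)ᵀ * Gout d L m G
  { θ := fun idx =>
      match idx with
      | Sum.inl (i, c) =>
          s.θ (Sum.inl (i, c))
            - η * (invFourthRoot L1' * G1 d L m G * invFourthRoot R1') i c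
      | Sum.inr (Sum.inl ⟨j, (i, c)⟩) =>
          s.θ (Sum.inr (Sum.inl ⟨j, (i, c)⟩))
            - η * (invFourthRoot (Lmid' j) * Gmid d L m G j * invFourthRoot (Rmid' j)) i c
      | Sum.inr (Sum.inr (Sum.inl b)) => s.θ (Sum.inr (Sum.inr (Sum.inl b)))
      | Sum.inr (Sum.inr (Sum.inr (Sum.inl c))) =>
          s.θ (Sum.inr (Sum.inr (Sum.inr (Sum.inl c))))
            - η * (invFourthRoot Lout' * Gout d L m G * invFourthRoot Rout') 0 c
      | Sum.inr (Sum.inr (Sum.inr (Sum.inr u))) =>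
          s.θ (Sum.inr (Sum.inr (Sum.inr (Sum.inr u))))
    L1 := L1', R1 := R1', Lmid := Lmid', Rmid := Rmid', Lout := Lout', Rout := Rout' }

/-- The initial Shampoo state: parameters `θ₀` and preconditioners `ε·I`. -/
noncomputable def shampooInit (d L : ℕ) (m : ℕ → ℕ) (ε : ℝ) (θ₀ : PSpace d L m) :
    SState d L m :=
  { θ := θ₀, L1 := ε • 1, R1 := ε • 1, Lmid := fun _ => ε • 1, Rmid := fun _ => ε • 1,
    Lout := ε • 1, Rout := ε • 1 }

/-- The Shampoo iterates. -/
noncomputable def shampooIter (d L : ℕ) (m : ℕ → ℕ) (η : ℝ)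
    (gr : PSpace d L m → PSpace d L m) (s₀ : SState d L m) : ℕ → SState d L m
  | 0 => s₀
  | t + 1 => shampooStep d L m η gr (shampooIter d L m η gr s₀ t)

section MatrixAux
variable {n : Type*} [Fintype n] [DecidableEq n]


lemma conj_psd {U A : Matrix n n ℝ} (hA : A.PosSemidef) :
    (U * A * Uᵀ).PosSemidef := by
  simpa [Matrix.conjTranspose_eq_transpose_of_trivial] using hA.mul_mul_conjTranspose_same U

lemma psdSqrtOld_eq_cfc (A : Matrix n n ℝ) (hA : A.IsHermitian) :
    psdSqrtOld A hA = cfc Real.sqrt A := by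
  rw [hA.cfc_eq, Matrix.IsHermitian.cfc, Unitary.conjStarAlgAut_apply]
  rfl

lemma cfc_conj {U A : Matrix n n ℝ} (hU : Uᵀ * U = 1) (hU' : U * Uᵀ = 1) (hA : A.IsHermitian)
    (f : ℝ → ℝ) : cfc f (U * A * Uᵀ) = U * cfc f A * Uᵀ := by
  have hu : U ∈ unitary (Matrix n n ℝ) := by
    rw [Unitary.mem_iff, star_eq_conjTranspose, conjTranspose_eq_transpose_of_trivial]
    exact ⟨hU, hU'⟩
  have hφ : Continuous (Unitary.conjStarAlgAut ℝ (Matrix n n ℝ) ⟨U, hu⟩) := by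
    have : (Unitary.conjStarAlgAut ℝ (Matrix n n ℝ) ⟨U, hu⟩ : Matrix n n ℝ → Matrix n n ℝ)
        = fun X => U * X * Uᵀ := by
      funext X
      rw [Unitary.conjStarAlgAut_apply]
      simp [star_eq_conjTranspose, conjTranspose_eq_transpose_of_trivial]
    rw [this]; fun_prop
  have h1 : Unitary.conjStarAlgAut ℝ (Matrix n n ℝ) ⟨U, hu⟩ A = U * A * Uᵀ := by
    rw [Unitary.conjStarAlgAut_apply]; simp [star_eq_conjTranspose, conjTranspose_eq_transpose_of_trivial]
  have h2 : Unitary.conjStarAlgAut ℝ (Matrix n n ℝ) ⟨U, hu⟩ (cfc f A) = U * cfc f A * Uᵀ := by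
    rw [Unitary.conjStarAlgAut_apply]; simp [star_eq_conjTranspose, conjTranspose_eq_transpose_of_trivial]
  have := StarAlgHomClass.map_cfc (S := ℝ) (Unitary.conjStarAlgAut ℝ (Matrix n n ℝ) ⟨U, hu⟩) f A
    (hf := (Matrix.finite_spectrum A).continuousOn f) (hφ := hφ) (ha := hA.isSelfAdjoint)
    (hφa := by
      rw [h1]
      simpa [star_eq_conjTranspose, conjTranspose_eq_transpose_of_trivial] using
        hA.isSelfAdjoint.conjugate U)
  rw [← h1, ← h2, this]

lemma inv_conj {U B : Matrix n n ℝ} (hU : Uᵀ * U = 1) (hU' : U * Uᵀ = 1) :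
    (U * B * Uᵀ)⁻¹ = U * B⁻¹ * Uᵀ := by
  have h1 : U⁻¹ = Uᵀ := Matrix.inv_eq_left_inv hU
  have h2 : (Uᵀ)⁻¹ = U := Matrix.inv_eq_left_inv hU'
  rw [Matrix.mul_inv_rev, Matrix.mul_inv_rev, h1, h2, mul_assoc]

lemma invFourthRoot_conj {U A : Matrix n n ℝ} (hU : Uᵀ * U = 1) (hU' : U * Uᵀ = 1) :
    invFourthRoot (U * A * Uᵀ) = U * invFourthRoot A * Uᵀ := by
  classical
  by_cases hA : A.PosSemidef
  · have h' : (U * A * Uᵀ).PosSemidef := conj_psd hA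
    rw [invFourthRoot, invFourthRoot, dif_pos hA, dif_pos h']
    simp only [psdSqrtOld_eq_cfc]
    have hs : (cfc Real.sqrt A).IsHermitian := by
      rw [← psdSqrtOld_eq_cfc A hA.1]; exact psdSqrtOld_isHermitian A hA.1
    rw [cfc_conj hU hU' hA.1, cfc_conj hU hU' hs, inv_conj hU hU']
  · have h' : ¬ (U * A * Uᵀ).PosSemidef := by
      intro h
      apply hA
      have h2 := conj_psd (U := Uᵀ) h
      have e : Uᵀ * (U * A * Uᵀ) * Uᵀᵀ = A := by
        rw [Matrix.transpose_transpose]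
        simp only [← mul_assoc]
        rw [hU, one_mul, mul_assoc, hU, mul_one]
      rwa [e] at h2
    rw [invFourthRoot, invFourthRoot, dif_neg hA, dif_neg h']
    simp
end MatrixAux

section Net
variable {d L : ℕ} {m : ℕ → ℕ}

lemma hLayer_rotQ (act : ℕ → ℝ → ℝ) (V : Matrix (Fin d) (Fin d) ℝ)
    (θ : PSpace d L m) (x : Fin d → ℝ) :
    ∀ j, hLayer d L m act (rotQ d L m V θ) x j = hLayer d L m act θ (V.mulVec x) j := by
  intro j
  induction j with
  | zero =>
    funext i
    simp only [hLayer, rotQ, Matrix.mulVec, dotProduct]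
    congr 1
    congr 1
    simp_rw [Finset.sum_mul, Finset.mul_sum, mul_assoc]
    rw [Finset.sum_comm]
  | succ j ih =>
    funext i
    simp only [hLayer, rotQ, ih]

lemma ffnet_rotQ (act : ℕ → ℝ → ℝ) (V : Matrix (Fin d) (Fin d) ℝ)
    (θ : PSpace d L m) (x : Fin d → ℝ) :
    ffnet d L m act (rotQ d L m V θ) x = ffnet d L m act θ (V.mulVec x) := by
  simp only [ffnet, rotQ, hLayer_rotQ]

lemma rotQ_rotQ (V W : Matrix (Fin d) (Fin d) ℝ) (θ : PSpace d L m) :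
    rotQ d L m V (rotQ d L m W θ) = rotQ d L m (W * V) θ := by
  funext idx
  rcases idx with ⟨i, c⟩ | idx
  · simp only [rotQ, Matrix.mul_apply, Finset.mul_sum]
    simp_rw [Finset.sum_mul, mul_assoc]
    rw [Finset.sum_comm]
  · rfl

lemma rotQ_one (θ : PSpace d L m) : rotQ d L m (1 : Matrix (Fin d) (Fin d) ℝ) θ = θ := by
  funext idx
  rcases idx with ⟨i, c⟩ | idx
  · simp [rotQ, Matrix.one_apply]
  · rfl

end Net

noncomputable def rotQCLM (d L : ℕ) (m : ℕ → ℕ) (V : Matrix (Fin d) (Fin d) ℝ) :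
    PSpace d L m →L[ℝ] PSpace d L m :=
  LinearMap.toContinuousLinearMap
  { toFun := rotQ d L m V
    map_add' := by
      intro θ φ; funext idx
      rcases idx with ⟨i, c⟩ | idx
      · simp [rotQ, add_mul, Finset.sum_add_distrib]
      · rfl
    map_smul' := by
      intro a θ; funext idx
      rcases idx with ⟨i, c⟩ | idx
      · simp [rotQ, Finset.mul_sum, mul_assoc]
      · rfl }

section Grad
variable {d L : ℕ} {m : ℕ → ℕ}

lemma rotQCLM_apply (V : Matrix (Fin d) (Fin d) ℝ) (θ : PSpace d L m) :
    rotQCLM d L m V θ = rotQ d L m V θ := rfl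

lemma rotQ_single_inl (V : Matrix (Fin d) (Fin d) ℝ) (i : Fin (m 1)) (c : Fin d) :
    rotQ d L m V (Pi.single (Sum.inl (i, c) : PIdx d L m) (1 : ℝ))
      = ∑ c' : Fin d, V c c' • (Pi.single (Sum.inl (i, c')) (1 : ℝ) : PSpace d L m) := by
  classical
  funext idx
  rcases idx with ⟨i', c''⟩ | idx
  · simp only [rotQ, Finset.sum_apply, Pi.smul_apply, smul_eq_mul, Pi.single_apply,
      Sum.inl.injEq, Prod.mk.injEq]
    by_cases h : i' = i
    · subst h; simp
    · simp [h, fun c' => (show ¬ (i' = i ∧ c' = c) from fun hc => h hc.1)]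
  · simp only [rotQ, Finset.sum_apply, Pi.smul_apply, smul_eq_mul, Pi.single_apply]
    simp

lemma rotQ_single_other (V : Matrix (Fin d) (Fin d) ℝ)
    (idx : (((j : Fin L) × (Fin (m (j.1 + 2)) × Fin (m (j.1 + 1)))) ⊕
      ((j : Fin (L + 1)) × Fin (m (j.1 + 1))) ⊕ Fin (m (L + 1)) ⊕ Unit)) :
    rotQ d L m V (Pi.single (Sum.inr idx : PIdx d L m) (1 : ℝ))
      = Pi.single (Sum.inr idx) (1 : ℝ) := by
  classical
  funext idx'
  rcases idx' with ⟨i', c'⟩ | idx'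
  · simp only [rotQ, Pi.single_apply]
    simp
  · rfl

lemma popLoss_rot (act : ℕ → ℝ → ℝ) (D : MeasureTheory.Measure ((Fin d → ℝ) × ℝ))
    (ℓ : ℝ → ℝ → ℝ) (U : Matrix (Fin d) (Fin d) ℝ)
    (hmeas : ∀ θ : PSpace d L m,
      Measurable fun q : (Fin d → ℝ) × ℝ => ℓ q.2 (ffnet d L m act θ q.1))
    (θ : PSpace d L m) :
    popLoss (rotMeas d U D) ℓ (ffnet d L m act) θ
      = popLoss D ℓ (ffnet d L m act) (rotQ d L m U θ) := by
  have hT : Measurable fun q : (Fin d → ℝ) × ℝ => (U.mulVec q.1, q.2) := by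
    refine Measurable.prod ?_ measurable_snd
    refine measurable_pi_lambda _ fun i => ?_
    show Measurable fun q : (Fin d → ℝ) × ℝ => ∑ j, U i j * q.1 j
    exact Finset.measurable_sum _ fun j _ =>
      measurable_const.mul ((measurable_pi_apply j).comp measurable_fst)
  unfold popLoss rotMeas
  rw [MeasureTheory.integral_map hT.aemeasurable (hmeas θ).aestronglyMeasurable]
  simp only [ffnet_rotQ]

lemma gradVec_rot (act : ℕ → ℝ → ℝ) (D : MeasureTheory.Measure ((Fin d → ℝ) × ℝ))
    (ℓ : ℝ → ℝ → ℝ) (U : Matrix (Fin d) (Fin d) ℝ)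
    (hmeas : ∀ θ : PSpace d L m,
      Measurable fun q : (Fin d → ℝ) × ℝ => ℓ q.2 (ffnet d L m act θ q.1))
    (hdiff : Differentiable ℝ (popLoss D ℓ (ffnet d L m act)))
    (θ : PSpace d L m) :
    gradVec d L m (popLoss (rotMeas d U D) ℓ (ffnet d L m act)) θ
      = rotQ d L m Uᵀ (gradVec d L m (popLoss D ℓ (ffnet d L m act)) (rotQ d L m U θ)) := by
  have hfun : popLoss (rotMeas d U D) ℓ (ffnet d L m act)
      = (popLoss D ℓ (ffnet d L m act)) ∘ (rotQCLM d L m U) := by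
    funext ψ; exact popLoss_rot act D ℓ U hmeas ψ
  have e1 : fderiv ℝ (popLoss (rotMeas d U D) ℓ (ffnet d L m act)) θ
      = (fderiv ℝ (popLoss D ℓ (ffnet d L m act)) (rotQ d L m U θ)).comp
          (rotQCLM d L m U) := by
    rw [hfun]
    rw [fderiv_comp θ (hdiff _) (rotQCLM d L m U).differentiableAt,
      ContinuousLinearMap.fderiv]
    rfl
  funext idx
  show fderiv ℝ (popLoss (rotMeas d U D) ℓ (ffnet d L m act)) θ (Pi.single idx 1) = _
  rw [e1, ContinuousLinearMap.comp_apply]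
  rcases idx with ⟨i, c⟩ | idx
  · rw [show (rotQCLM d L m U) (Pi.single (Sum.inl (i, c) : PIdx d L m) (1 : ℝ))
        = ∑ c' : Fin d, U c c' • (Pi.single (Sum.inl (i, c')) (1 : ℝ) : PSpace d L m) from rotQ_single_inl U i c]
    rw [map_sum]
    simp only [ContinuousLinearMap.map_smul, smul_eq_mul]
    show _ = rotQ d L m Uᵀ (gradVec d L m (popLoss D ℓ (ffnet d L m act)) (rotQ d L m U θ))
      (Sum.inl (i, c))
    simp only [rotQ, gradVec, Matrix.transpose_apply]
    exact Finset.sum_congr rfl fun c' _ => mul_comm _ _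
  · rw [show (rotQCLM d L m U) (Pi.single (Sum.inr idx : PIdx d L m) (1 : ℝ))
        = Pi.single (Sum.inr idx) (1 : ℝ) from rotQ_single_other U idx]
    rfl

end Grad

section Main
variable {d L : ℕ} {m : ℕ → ℕ}

lemma G1_rotQ (U : Matrix (Fin d) (Fin d) ℝ) (g : PSpace d L m) :
    G1 d L m (rotQ d L m U g) = G1 d L m g * U := by
  ext i c
  simp [G1, rotQ, Matrix.mul_apply]

lemma Gmid_rotQ (U : Matrix (Fin d) (Fin d) ℝ) (g : PSpace d L m) (j : Fin L) :
    Gmid d L m (rotQ d L m U g) j = Gmid d L m g j := rfl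

lemma Gout_rotQ (U : Matrix (Fin d) (Fin d) ℝ) (g : PSpace d L m) :
    Gout d L m (rotQ d L m U g) = Gout d L m g := rfl

lemma entry_sub (η : ℝ) (θI : PSpace d L m) (M : Matrix (Fin (m 1)) (Fin d) ℝ)
    (W : Matrix (Fin d) (Fin d) ℝ) (i : Fin (m 1)) (c : Fin d) :
    ∑ c', (θI (Sum.inl (i, c')) - η * M i c') * W c' c
      = (∑ c', θI (Sum.inl (i, c')) * W c' c) - η * (M * W) i c := by
  simp [sub_mul, Finset.sum_sub_distrib, Matrix.mul_apply, Finset.mul_sum, mul_assoc]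

lemma step_rel (U : Matrix (Fin d) (Fin d) ℝ) (hU : Uᵀ * U = 1) (hU' : U * Uᵀ = 1)
    (η : ℝ) (grI grU : PSpace d L m → PSpace d L m)
    (hgr : ∀ ψ : PSpace d L m, grU (rotQ d L m Uᵀ ψ) = rotQ d L m Uᵀ (grI ψ))
    (sI sU : SState d L m)
    (h1 : sU.θ = rotQ d L m Uᵀ sI.θ) (h2 : sU.L1 = sI.L1)
    (h3 : sU.R1 = U * sI.R1 * Uᵀ) (h4 : sU.Lmid = sI.Lmid) (h5 : sU.Rmid = sI.Rmid)
    (h6 : sU.Lout = sI.Lout) (h7 : sU.Rout = sI.Rout) :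
    (shampooStep d L m η grU sU).θ = rotQ d L m Uᵀ (shampooStep d L m η grI sI).θ ∧
    (shampooStep d L m η grU sU).L1 = (shampooStep d L m η grI sI).L1 ∧
    (shampooStep d L m η grU sU).R1 = U * (shampooStep d L m η grI sI).R1 * Uᵀ ∧
    (shampooStep d L m η grU sU).Lmid = (shampooStep d L m η grI sI).Lmid ∧
    (shampooStep d L m η grU sU).Rmid = (shampooStep d L m η grI sI).Rmid ∧
    (shampooStep d L m η grU sU).Lout = (shampooStep d L m η grI sI).Lout ∧
    (shampooStep d L m η grU sU).Rout = (shampooStep d L m η grI sI).Rout := by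
  set G : PSpace d L m := grI sI.θ with hG
  have hGU : grU sU.θ = rotQ d L m Uᵀ G := by rw [h1, hgr]
  have hG1 : G1 d L m (grU sU.θ) = G1 d L m G * Uᵀ := by rw [hGU, G1_rotQ]
  have hGm : ∀ j, Gmid d L m (grU sU.θ) j = Gmid d L m G j := by
    intro j; rw [hGU, Gmid_rotQ]
  have hGo : Gout d L m (grU sU.θ) = Gout d L m G := by rw [hGU, Gout_rotQ]
  have hL1 : sU.L1 + G1 d L m (grU sU.θ) * (G1 d L m (grU sU.θ))ᵀ
      = sI.L1 + G1 d L m G * (G1 d L m G)ᵀ := by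
    rw [h2, hG1, Matrix.transpose_mul, Matrix.transpose_transpose]
    congr 1
    rw [Matrix.mul_assoc, ← Matrix.mul_assoc Uᵀ U, hU, Matrix.one_mul]
  have hR1 : sU.R1 + (G1 d L m (grU sU.θ))ᵀ * G1 d L m (grU sU.θ)
      = U * (sI.R1 + (G1 d L m G)ᵀ * G1 d L m G) * Uᵀ := by
    rw [h3, hG1, Matrix.transpose_mul, Matrix.transpose_transpose, Matrix.mul_add,
      Matrix.add_mul]
    congr 1
    simp only [Matrix.mul_assoc]
  refine ⟨?_, ?_, ?_, ?_, ?_, ?_, ?_⟩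
  · funext idx
    rcases idx with ⟨i, c⟩ | ⟨j, i, c⟩ | b | c | u
    · show sU.θ (Sum.inl (i, c))
            - η * (invFourthRoot (sU.L1 + G1 d L m (grU sU.θ) * (G1 d L m (grU sU.θ))ᵀ)
              * G1 d L m (grU sU.θ)
              * invFourthRoot (sU.R1 + (G1 d L m (grU sU.θ))ᵀ * G1 d L m (grU sU.θ))) i c
          = ∑ c', ((shampooStep d L m η grI sI).θ (Sum.inl (i, c'))) * Uᵀ c' c
      have e1 : invFourthRoot (sU.R1 + (G1 d L m (grU sU.θ))ᵀ * G1 d L m (grU sU.θ))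
          = U * invFourthRoot (sI.R1 + (G1 d L m G)ᵀ * G1 d L m G) * Uᵀ := by
        rw [hR1, invFourthRoot_conj hU hU']
      have e2 : invFourthRoot (sU.L1 + G1 d L m (grU sU.θ) * (G1 d L m (grU sU.θ))ᵀ)
          * G1 d L m (grU sU.θ)
          * invFourthRoot (sU.R1 + (G1 d L m (grU sU.θ))ᵀ * G1 d L m (grU sU.θ))
          = (invFourthRoot (sI.L1 + G1 d L m G * (G1 d L m G)ᵀ) * G1 d L m G
              * invFourthRoot (sI.R1 + (G1 d L m G)ᵀ * G1 d L m G)) * Uᵀ := by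
        rw [hL1, e1, hG1]
        calc invFourthRoot (sI.L1 + G1 d L m G * (G1 d L m G)ᵀ) * (G1 d L m G * Uᵀ)
              * (U * invFourthRoot (sI.R1 + (G1 d L m G)ᵀ * G1 d L m G) * Uᵀ)
            = invFourthRoot (sI.L1 + G1 d L m G * (G1 d L m G)ᵀ) * G1 d L m G * (Uᵀ * U)
              * (invFourthRoot (sI.R1 + (G1 d L m G)ᵀ * G1 d L m G) * Uᵀ) := by
              simp only [Matrix.mul_assoc]
          _ = _ := by rw [hU, Matrix.mul_one]; simp only [Matrix.mul_assoc]
      rw [e2]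
      have e3 : ∀ c', (shampooStep d L m η grI sI).θ (Sum.inl (i, c'))
          = sI.θ (Sum.inl (i, c'))
            - η * (invFourthRoot (sI.L1 + G1 d L m G * (G1 d L m G)ᵀ) * G1 d L m G
              * invFourthRoot (sI.R1 + (G1 d L m G)ᵀ * G1 d L m G)) i c' := fun c' => rfl
      simp only [e3]
      rw [entry_sub]
      have e4 : sU.θ (Sum.inl (i, c)) = ∑ c', sI.θ (Sum.inl (i, c')) * Uᵀ c' c := by
        rw [h1]; rfl
      rw [e4]
    · show sU.θ (Sum.inr (Sum.inl ⟨j, (i, c)⟩))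
          - η * (invFourthRoot (sU.Lmid j + Gmid d L m (grU sU.θ) j * (Gmid d L m (grU sU.θ) j)ᵀ)
            * Gmid d L m (grU sU.θ) j
            * invFourthRoot (sU.Rmid j + (Gmid d L m (grU sU.θ) j)ᵀ * Gmid d L m (grU sU.θ) j)) i c
        = (shampooStep d L m η grI sI).θ (Sum.inr (Sum.inl ⟨j, (i, c)⟩))
      have : sU.θ (Sum.inr (Sum.inl ⟨j, (i, c)⟩)) = sI.θ (Sum.inr (Sum.inl ⟨j, (i, c)⟩)) := by
        rw [h1]; rfl
      rw [this, hGm, h4, h5]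
      rfl
    · show sU.θ (Sum.inr (Sum.inr (Sum.inl b)))
        = (shampooStep d L m η grI sI).θ (Sum.inr (Sum.inr (Sum.inl b)))
      rw [h1]; rfl
    · show sU.θ (Sum.inr (Sum.inr (Sum.inr (Sum.inl c))))
          - η * (invFourthRoot (sU.Lout + Gout d L m (grU sU.θ) * (Gout d L m (grU sU.θ))ᵀ)
            * Gout d L m (grU sU.θ)
            * invFourthRoot (sU.Rout + (Gout d L m (grU sU.θ))ᵀ * Gout d L m (grU sU.θ))) 0 c
        = (shampooStep d L m η grI sI).θ (Sum.inr (Sum.inr (Sum.inr (Sum.inl c))))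
      have : sU.θ (Sum.inr (Sum.inr (Sum.inr (Sum.inl c))))
          = sI.θ (Sum.inr (Sum.inr (Sum.inr (Sum.inl c)))) := by rw [h1]; rfl
      rw [this, hGo, h6, h7]
      rfl
    · show sU.θ (Sum.inr (Sum.inr (Sum.inr (Sum.inr u))))
        = (shampooStep d L m η grI sI).θ (Sum.inr (Sum.inr (Sum.inr (Sum.inr u))))
      rw [h1]; rfl
  · exact hL1
  · exact hR1
  · funext j
    show sU.Lmid j + Gmid d L m (grU sU.θ) j * (Gmid d L m (grU sU.θ) j)ᵀ = _
    rw [hGm, h4]; rfl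
  · funext j
    show sU.Rmid j + (Gmid d L m (grU sU.θ) j)ᵀ * Gmid d L m (grU sU.θ) j = _
    rw [hGm, h5]; rfl
  · show sU.Lout + Gout d L m (grU sU.θ) * (Gout d L m (grU sU.θ))ᵀ = _
    rw [hGo, h6]; rfl
  · show sU.Rout + (Gout d L m (grU sU.θ))ᵀ * Gout d L m (grU sU.θ) = _
    rw [hGo, h7]; rfl

end Main


/-- **Shampoo equivariance.**  Run Shampoo (stepsize `η > 0`, preconditioner
initialization `ε·I` with `ε > 0`) on the population loss `L(·;f)` from `θ₀`, and on the
rotated loss `L^(U)(·;f)` from `(Q^(U))ᵀθ₀`.  Then for every `t`,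
`θ^(U)_t = (Q^(U))ᵀ θ^(I)_t` and `f(θ^(U)_t; x) = f(θ^(I)_t; Uᵀx)` for all `x`; hence the
decision boundaries produced by Shampoo are equivariant to data rotations. -/
theorem stmt_17 (d L : ℕ) (m : ℕ → ℕ) (act : ℕ → ℝ → ℝ)
    (D : Measure ((Fin d → ℝ) × ℝ)) (ℓ : ℝ → ℝ → ℝ)
    (U : Matrix (Fin d) (Fin d) ℝ) (hU : Uᵀ * U = 1) (hU' : U * Uᵀ = 1)
    -- the population loss is finite, measurable and differentiable:
    (hmeas : ∀ θ : PSpace d L m,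
      Measurable (fun q : (Fin d → ℝ) × ℝ => ℓ q.2 (ffnet d L m act θ q.1)))
    (hint : ∀ θ : PSpace d L m,
      Integrable (fun q : (Fin d → ℝ) × ℝ => ℓ q.2 (ffnet d L m act θ q.1)) D)
    (hdiff : Differentiable ℝ (popLoss D ℓ (ffnet d L m act)))
    (η ε : ℝ) (hη : 0 < η) (hε : 0 < ε) (θ₀ : PSpace d L m) :
    ∀ t : ℕ,
      (shampooIter d L m η (gradVec d L m (popLoss (rotMeas d U D) ℓ (ffnet d L m act)))
          (shampooInit d L m ε (rotQ d L m Uᵀ θ₀)) t).θ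
        = rotQ d L m Uᵀ
            ((shampooIter d L m η (gradVec d L m (popLoss D ℓ (ffnet d L m act)))
              (shampooInit d L m ε θ₀) t).θ)
      ∧ ∀ x : Fin d → ℝ,
          ffnet d L m act
            ((shampooIter d L m η
                (gradVec d L m (popLoss (rotMeas d U D) ℓ (ffnet d L m act)))
                (shampooInit d L m ε (rotQ d L m Uᵀ θ₀)) t).θ) x
            = ffnet d L m act
                ((shampooIter d L m η (gradVec d L m (popLoss D ℓ (ffnet d L m act)))
                  (shampooInit d L m ε θ₀) t).θ) (Uᵀ.mulVec x) := by
  intro t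
  have hgr : ∀ ψ : PSpace d L m,
      gradVec d L m (popLoss (rotMeas d U D) ℓ (ffnet d L m act)) (rotQ d L m Uᵀ ψ)
        = rotQ d L m Uᵀ (gradVec d L m (popLoss D ℓ (ffnet d L m act)) ψ) := by
    intro ψ
    rw [gradVec_rot act D ℓ U hmeas hdiff (rotQ d L m Uᵀ ψ), rotQ_rotQ, hU, rotQ_one]
  set grI := gradVec d L m (popLoss D ℓ (ffnet d L m act)) with hgrI
  set grU := gradVec d L m (popLoss (rotMeas d U D) ℓ (ffnet d L m act)) with hgrU
  set sI := shampooIter d L m η grI (shampooInit d L m ε θ₀) with hsI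
  set sU := shampooIter d L m η grU (shampooInit d L m ε (rotQ d L m Uᵀ θ₀)) with hsU
  have key : ∀ t : ℕ,
      (sU t).θ = rotQ d L m Uᵀ (sI t).θ ∧ (sU t).L1 = (sI t).L1 ∧
      (sU t).R1 = U * (sI t).R1 * Uᵀ ∧ (sU t).Lmid = (sI t).Lmid ∧
      (sU t).Rmid = (sI t).Rmid ∧ (sU t).Lout = (sI t).Lout ∧
      (sU t).Rout = (sI t).Rout := by
    intro t
    induction t with
    | zero =>
      refine ⟨rfl, rfl, ?_, rfl, rfl, rfl, rfl⟩
      show (ε • 1 : Matrix (Fin d) (Fin d) ℝ) = U * (ε • 1) * Uᵀ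
      rw [Matrix.mul_smul, Matrix.mul_one, Matrix.smul_mul, hU']
    | succ t ih =>
      exact step_rel U hU hU' η grI grU hgr (sI t) (sU t) ih.1 ih.2.1 ih.2.2.1
        ih.2.2.2.1 ih.2.2.2.2.1 ih.2.2.2.2.2.1 ih.2.2.2.2.2.2
  refine ⟨(key t).1, fun x => ?_⟩
  rw [(key t).1, ffnet_rotQ]
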